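/- arXiv:1704.07920 — 4 statements merged into one kernel-verified Lean document; each statement's English description precedes it below -/
import Mathlib

section
/- For every positive integer m and all complex numbers x, y, the following identity of formal power series in ℂ⟦t⟧ holds: Σ_{n≥0} (_mL_n(x,y|q)/[n]_q!) t^n = e_q(yt) · ε_q^m(-x t^m). -/
/-- The q-analogue of a natural number: [n]_q = Σ_{k=1}^n q^{k-1}. -/
noncomputable def qnat (q : ℝ) (n : ℕ) : ℝ := ∑ k ∈ Finset.range n, q ^ k

/-- The q-factorial [n]_q! = Π_{k=1}^n [k]_q, with [0]_q! = 1. -/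
noncomputable def qfact (q : ℝ) (n : ℕ) : ℝ := ∏ k ∈ Finset.range n, qnat q (k + 1)

/-- The Gaussian q-binomial coefficient [n choose k]_q. -/
noncomputable def qbinom (q : ℝ) (n k : ℕ) : ℝ := qfact q n / (qfact q k * qfact q (n - k))

/-- JHC q-subtraction power (x ⊖_q y)^n. -/
noncomputable def qsubPow (q : ℝ) (x y : ℂ) (n : ℕ) : ℂ :=
  ∑ k ∈ Finset.range (n + 1),
    (qbinom q n k : ℂ) * (q : ℂ) ^ (k * (k - 1) / 2) * x ^ (n - k) * (-y) ^ k

/-- JHC q-addition power (x ⊕_q y)^n. -/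
noncomputable def qaddPow (q : ℝ) (x y : ℂ) (n : ℕ) : ℂ :=
  ∑ k ∈ Finset.range (n + 1),
    (qbinom q n k : ℂ) * (q : ℂ) ^ (k * (k - 1) / 2) * x ^ (n - k) * y ^ k

/-- The q-deformed 2D Laguerre polynomial _mL_n(x,y|q). -/
noncomputable def qLag (q : ℝ) (m : ℕ) (x y : ℂ) (n : ℕ) : ℂ :=
  (qfact q n : ℂ) * ∑ k ∈ Finset.range (n / m + 1),
    (q : ℂ) ^ (m * (k * (k - 1) / 2)) * x ^ k * y ^ (n - m * k) /
      ((qfact (q ^ m) k : ℂ) ^ 2 * (qfact q (n - m * k) : ℂ))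

/-- The q-deformed Laguerre-Gould-Hopper polynomial _LH_n^{(m,s)}(x,y,z|q). -/
noncomputable def qLGH (q : ℝ) (m s : ℕ) (x y z : ℂ) (n : ℕ) : ℂ :=
  (qfact q n : ℂ) * ∑ k ∈ Finset.range (n / s + 1),
    (q : ℂ) ^ (s * (k * (k - 1) / 2)) * z ^ k * qLag q m x y (n - s * k) /
      ((qfact (q ^ s) k : ℂ) * (qfact q (n - s * k) : ℂ))

/-- The two-variable q-Gould-Hopper kernel G_n^s(u,v). -/
noncomputable def qGH (q : ℝ) (s : ℕ) (u v : ℂ) (n : ℕ) : ℂ :=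
  (qfact q n : ℂ) * ∑ k ∈ Finset.range (n / s + 1),
    (q : ℂ) ^ (s * (k * (k - 1) / 2)) * u ^ (n - s * k) * v ^ k /
      ((qfact q (n - s * k) : ℂ) * (qfact (q ^ s) k : ℂ))

/-- The kernel G_n^s(ξ ⊖_q y, ζ ⊖_q z), with monomial powers replaced by
JHC q-subtraction powers. -/
noncomputable def qGHsub (q : ℝ) (s : ℕ) (ξ y ζ z : ℂ) (n : ℕ) : ℂ :=
  (qfact q n : ℂ) * ∑ k ∈ Finset.range (n / s + 1),
    (q : ℂ) ^ (s * (k * (k - 1) / 2)) * qsubPow q ξ y (n - s * k) * qsubPow q ζ z k /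
      ((qfact q (n - s * k) : ℂ) * (qfact (q ^ s) k : ℂ))

/-- The q-exponential series e_q(yt) = Σ_{n≥0} y^n t^n/[n]_q! in ℂ⟦t⟧. -/
noncomputable def eqSeries (q : ℝ) (y : ℂ) : PowerSeries ℂ :=
  PowerSeries.mk fun n => y ^ n / (qfact q n : ℂ)

/-- The (q,m)-deformed Bessel-Tricomi series
ε_q^m(-x t^m) = Σ_{k≥0} q^{m k(k-1)/2} x^k t^{mk}/([k]_{q^m}!)^2 in ℂ⟦t⟧. -/
noncomputable def besselTricomiSeries (q : ℝ) (m : ℕ) (x : ℂ) : PowerSeries ℂ :=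
  PowerSeries.mk fun n =>
    if m ∣ n then
      (q : ℂ) ^ (m * ((n / m) * (n / m - 1) / 2)) * x ^ (n / m) /
        (qfact (q ^ m) (n / m) : ℂ) ^ 2
    else 0


/-!
Compare coefficients of `t ^ n`: in the Cauchy product of `e_q(yt)` with `ε_q^m(-x t^m)` only the
splittings `n = m k + (n - m k)` survive, and their sum is the one defining `_mL_n(x,y|q) / [n]_q!`.
-/

open PowerSeries Finset

lemma qnat_succ_pos {q : ℝ} (hq : 0 ≤ q) (n : ℕ) : 0 < qnat q (n + 1) :=
  sum_pos' (fun i _ => pow_nonneg hq i) ⟨0, by simp, by simp⟩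

lemma qfact_pos {q : ℝ} (hq : 0 ≤ q) (n : ℕ) : 0 < qfact q n :=
  prod_pos fun k _ => qnat_succ_pos hq k

lemma qLag_div_qfact {q : ℝ} (hq : 0 ≤ q) (m : ℕ) (x y : ℂ) (n : ℕ) :
    qLag q m x y n / (qfact q n : ℂ) =
      ∑ k ∈ range (n / m + 1),
        (q : ℂ) ^ (m * (k * (k - 1) / 2)) * x ^ k * y ^ (n - m * k) /
          ((qfact (q ^ m) k : ℂ) ^ 2 * (qfact q (n - m * k) : ℂ)) := by
  rw [qLag, mul_div_cancel_left₀ _ (by exact_mod_cast (qfact_pos hq n).ne')]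

/-- For `m = 0` this still holds: both sides are `a 0 * coeff n g`, since `i / 0 = 0`. -/
lemma coeff_mk_ite_dvd_mul {R : Type*} [CommSemiring R] (m : ℕ) (a : ℕ → R) (g : R⟦X⟧) (n : ℕ) :
    coeff n (mk (fun i => if m ∣ i then a (i / m) else 0) * g) =
      ∑ k ∈ range (n / m + 1), a k * coeff (n - m * k) g := by
  rw [coeff_mul, Nat.sum_antidiagonal_eq_sum_range_succ_mk]
  simp only [coeff_mk, ite_mul, zero_mul]
  rw [← sum_filter]
  apply sum_nbij' (· / m) (m * ·)
  · intro i hi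
    simp only [mem_filter, mem_range] at hi ⊢
    exact Nat.lt_succ_of_le (Nat.div_le_div_right (by omega))
  · intro k hk
    simp only [mem_filter, mem_range] at hk ⊢
    exact ⟨Nat.lt_succ_of_le ((Nat.mul_le_mul_left m (by omega)).trans (Nat.mul_div_le n m)),
      dvd_mul_right m k⟩
  · intro i hi
    exact Nat.mul_div_cancel' (mem_filter.mp hi).2
  · intro k hk
    rcases m.eq_zero_or_pos with rfl | hm
    · simp_all
    · exact Nat.mul_div_cancel_left k hm
  · intro i hi
    rw [Nat.mul_div_cancel' (mem_filter.mp hi).2]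

theorem generating_function_qLaguerre_general (q : ℝ) (hq0 : 0 < q)
    (m : ℕ) (x y : ℂ) :
    (PowerSeries.mk fun n => qLag q m x y n / (qfact q n : ℂ)) =
      eqSeries q y * besselTricomiSeries q m x := by
  ext n
  rw [coeff_mk, qLag_div_qfact hq0.le, mul_comm (eqSeries q y), besselTricomiSeries,
    coeff_mk_ite_dvd_mul m
      fun k => (q : ℂ) ^ (m * (k * (k - 1) / 2)) * x ^ k / (qfact (q ^ m) k : ℂ) ^ 2]
  refine sum_congr rfl fun k _ => ?_
  rw [eqSeries, coeff_mk, div_mul_div_comm]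

theorem generating_function_qLaguerre (q : ℝ) (hq0 : 0 < q) (hq1 : q < 1)
    (m : ℕ) (hm : 0 < m) (x y : ℂ) :
    (PowerSeries.mk fun n => qLag q m x y n / (qfact q n : ℂ)) =
      eqSeries q y * besselTricomiSeries q m x :=
  generating_function_qLaguerre_general q hq0 m x y
end

section
/- For all positive integers m, s, all natural numbers k, l, and all complex numbers x, ξ, ζ, y, z: _LH_{k+l}^{(m,s)}(x,ξ,ζ) = Σ_{n=0}^{k} Σ_{r=0}^{l} C(k,n) C(l,r) · g_{n+r}^s(ξ−y, ζ−z) · _LH_{k+l-n-r}^{(m,s)}(x,y,z), where C(a,b) denotes the ordinary binomial coefficient. -/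
/-- The Gould-Hopper polynomial g_n^m(x,y) = n! Σ_{k=0}^{⌊n/m⌋} x^{n-mk} y^k/(k!(n-mk)!). -/
noncomputable def gouldHopper (m : ℕ) (x y : ℂ) (n : ℕ) : ℂ :=
  (Nat.factorial n : ℂ) * ∑ k ∈ Finset.range (n / m + 1),
    x ^ (n - m * k) * y ^ k /
      ((Nat.factorial k : ℂ) * (Nat.factorial (n - m * k) : ℂ))

/-- The 2D Laguerre polynomial _mL_n(x,y) = n! Σ_{k=0}^{⌊n/m⌋} x^k y^{n-mk}/((k!)² (n-mk)!). -/
noncomputable def lag2D (m : ℕ) (x y : ℂ) (n : ℕ) : ℂ :=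
  (Nat.factorial n : ℂ) * ∑ k ∈ Finset.range (n / m + 1),
    x ^ k * y ^ (n - m * k) /
      ((Nat.factorial k : ℂ) ^ 2 * (Nat.factorial (n - m * k) : ℂ))

/-- The Laguerre-Gould-Hopper polynomial
_LH_n^{(m,s)}(x,y,z) = n! Σ_{k=0}^{⌊n/s⌋} z^k _mL_{n-sk}(x,y)/(k!(n-sk)!). -/
noncomputable def LGH (m s : ℕ) (x y z : ℂ) (n : ℕ) : ℂ :=
  (Nat.factorial n : ℂ) * ∑ k ∈ Finset.range (n / s + 1),
    z ^ k * lag2D m x y (n - s * k) /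
      ((Nat.factorial k : ℂ) * (Nat.factorial (n - s * k) : ℂ))

/-!
The exponential generating functions are `∑ g_n^s(x,y) tⁿ/n! = e^{xt + yt^s}` and
`∑ _LH_n^{(m,s)}(x,y,z) tⁿ/n! = C(x t^m) e^{yt + zt^s}` with `C(u) = ∑ uᵏ/(k!)²`. Splitting
`ξ = (ξ - y) + y` and `ζ = (ζ - z) + z` in the exponent factors the generating function of
`_LH(x,ξ,ζ)` as that of `g^s(ξ - y, ζ - z)` times that of `_LH(x,y,z)`, so `_LH_N(x,ξ,ζ)` is a
binomial convolution; for `N = k + l`, Vandermonde's identity splits `C(k + l, j)` into the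
double sum.
-/

open PowerSeries Finset
open scoped Nat

theorem PowerSeries.coeff_expand_mul_eq_sum {R : Type*} [CommRing R] {p : ℕ} (hp : p ≠ 0)
    (f g : R⟦X⟧) (n : ℕ) :
    coeff n (expand p hp f * g) =
      ∑ k ∈ range (n / p + 1), coeff k f * coeff (n - p * k) g := by
  have hp' : 0 < p := Nat.pos_of_ne_zero hp
  have hmem (k : ℕ) : k ∈ range (n / p + 1) ↔ p * k ∈ range (n + 1) := by
    rw [mem_range, mem_range, Nat.lt_succ_iff, Nat.lt_succ_iff, Nat.le_div_iff_mul_le hp',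
      mul_comm]
  have hsub : (range (n / p + 1)).image (p * ·) ⊆ range (n + 1) := by
    simpa only [image_subset_iff] using fun k => (hmem k).mp
  rw [coeff_mul, Nat.sum_antidiagonal_eq_sum_range_succ_mk, ← sum_subset hsub,
    sum_image fun a _ b _ h => Nat.eq_of_mul_eq_mul_left hp' h]
  · simp only [coeff_expand_mul]
  · intro i hi hni
    rw [coeff_expand_of_not_dvd p hp f, zero_mul]
    rintro ⟨k, rfl⟩
    exact hni (mem_image_of_mem _ ((hmem k).mpr hi))

theorem Finset.sum_range_choose_mul_choose_mul {R : Type*} [CommSemiring R] (k l : ℕ)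
    (F : ℕ → R) :
    ∑ n ∈ range (k + 1), ∑ r ∈ range (l + 1), (k.choose n : R) * l.choose r * F (n + r) =
      ∑ j ∈ range (k + l + 1), ((k + l).choose j : R) * F j := by
  set G : ℕ × ℕ → R := fun p => (k.choose p.1 : R) * l.choose p.2 * F (p.1 + p.2)
  have hG : ∀ p ∉ range (k + 1) ×ˢ range (l + 1), G p = 0 := by
    intro p hp
    simp only [mem_product, mem_range, Nat.lt_succ_iff, not_and_or, not_le] at hp
    rcases hp with hp | hp <;> simp [G, Nat.choose_eq_zero_of_lt hp]
  have hmaps : ∀ p ∈ range (k + 1) ×ˢ range (l + 1), p.1 + p.2 ∈ range (k + l + 1) := by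
    simp only [mem_product, mem_range]
    omega
  rw [← sum_product' (f := fun n r => (k.choose n : R) * l.choose r * F (n + r)),
    ← sum_fiberwise_of_maps_to hmaps]
  refine sum_congr rfl fun j _ => ?_
  calc ∑ p ∈ range (k + 1) ×ˢ range (l + 1) with p.1 + p.2 = j, G p
      = ∑ p ∈ antidiagonal j, G p := by
        refine sum_subset (fun p hp => mem_antidiagonal.mpr (mem_filter.mp hp).2) ?_
        exact fun p hpj hp => hG p fun hbox => hp (mem_filter.mpr ⟨hbox, mem_antidiagonal.mp hpj⟩)
    _ = ∑ p ∈ antidiagonal j, (k.choose p.1 : R) * l.choose p.2 * F j := by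
        refine sum_congr rfl fun p hp => ?_
        rw [← mem_antidiagonal.mp hp]
    _ = ((k + l).choose j : R) * F j := by
        rw [← sum_mul, Nat.add_choose_eq]
        push_cast
        rfl

section ExponentialGeneratingFunction

variable {K : Type*} [Field K]

noncomputable def egf (f : ℕ → K) : K⟦X⟧ :=
  mk fun n => f n / n !

theorem coeff_egf (f : ℕ → K) (n : ℕ) : coeff n (egf f) = f n / n ! :=
  coeff_mk _ _

theorem egf_injective [CharZero K] : Function.Injective (egf : (ℕ → K) → K⟦X⟧) := by
  intro f g h
  funext n
  simpa [coeff_egf, Nat.factorial_ne_zero] using congrArg (coeff n) h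

theorem rescale_exp_eq_egf [CharZero K] (a : K) : rescale a (exp K) = egf (a ^ ·) := by
  ext n
  simp [coeff_egf, coeff_exp, div_eq_mul_inv]

theorem egf_mul [CharZero K] (f g : ℕ → K) :
    egf f * egf g = egf fun n => ∑ i ∈ range (n + 1), (n.choose i : K) * f i * g (n - i) := by
  ext n
  rw [coeff_mul, Nat.sum_antidiagonal_eq_sum_range_succ_mk, coeff_egf, sum_div]
  refine sum_congr rfl fun i hi => ?_
  rw [coeff_egf, coeff_egf, Nat.cast_choose K (Nat.lt_succ_iff.mp (mem_range.mp hi))]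
  field_simp
  rw [mul_div_mul_right _ _ (Nat.cast_ne_zero.mpr n.factorial_ne_zero)]

end ExponentialGeneratingFunction

section LaguerreGouldHopper

variable {m s : ℕ}

theorem egf_gouldHopper (hs : s ≠ 0) (x y : ℂ) :
    egf (gouldHopper s x y) = expand s hs (rescale y (exp ℂ)) * rescale x (exp ℂ) := by
  ext n
  rw [coeff_expand_mul_eq_sum, coeff_egf, gouldHopper,
    mul_div_cancel_left₀ _ (Nat.cast_ne_zero.mpr n.factorial_ne_zero)]
  refine sum_congr rfl fun k _ => ?_
  rw [rescale_exp_eq_egf, rescale_exp_eq_egf, coeff_egf, coeff_egf]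
  field_simp

theorem egf_lag2D (hm : m ≠ 0) (x y : ℂ) :
    egf (lag2D m x y) = expand m hm (mk fun k => x ^ k / (k ! : ℂ) ^ 2) * rescale y (exp ℂ) := by
  ext n
  rw [coeff_expand_mul_eq_sum, coeff_egf, lag2D,
    mul_div_cancel_left₀ _ (Nat.cast_ne_zero.mpr n.factorial_ne_zero)]
  refine sum_congr rfl fun k _ => ?_
  rw [rescale_exp_eq_egf, coeff_mk, coeff_egf]
  field_simp

theorem egf_LGH (hs : s ≠ 0) (x y z : ℂ) :
    egf (LGH m s x y z) = expand s hs (rescale z (exp ℂ)) * egf (lag2D m x y) := by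
  ext n
  rw [coeff_expand_mul_eq_sum, coeff_egf, LGH,
    mul_div_cancel_left₀ _ (Nat.cast_ne_zero.mpr n.factorial_ne_zero)]
  refine sum_congr rfl fun k _ => ?_
  rw [rescale_exp_eq_egf, coeff_egf, coeff_egf]
  field_simp

theorem egf_LGH_eq_egf_gouldHopper_mul (hm : m ≠ 0) (hs : s ≠ 0) (x ξ ζ y z : ℂ) :
    egf (LGH m s x ξ ζ) = egf (gouldHopper s (ξ - y) (ζ - z)) * egf (LGH m s x y z) := by
  have hexp (a b : ℂ) : rescale a (exp ℂ) = rescale (a - b) (exp ℂ) * rescale b (exp ℂ) := by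
    rw [exp_mul_exp_eq_exp_add, sub_add_cancel]
  simp only [egf_LGH hs, egf_lag2D hm, egf_gouldHopper hs, hexp ξ y, hexp ζ z, map_mul]
  ring

theorem LGH_eq_sum_choose_mul_gouldHopper (hm : m ≠ 0) (hs : s ≠ 0) (x ξ ζ y z : ℂ) (n : ℕ) :
    LGH m s x ξ ζ n = ∑ j ∈ range (n + 1),
      (n.choose j : ℂ) * gouldHopper s (ξ - y) (ζ - z) j * LGH m s x y z (n - j) := by
  have h := (egf_LGH_eq_egf_gouldHopper_mul hm hs x ξ ζ y z).trans (egf_mul _ _)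
  exact congrFun (egf_injective h) n

end LaguerreGouldHopper

theorem LGH_connection (m s : ℕ) (hm : 0 < m) (hs : 0 < s)
    (k l : ℕ) (x ξ ζ y z : ℂ) :
    LGH m s x ξ ζ (k + l) =
      ∑ n ∈ Finset.range (k + 1), ∑ r ∈ Finset.range (l + 1),
        (Nat.choose k n : ℂ) * (Nat.choose l r : ℂ) *
          gouldHopper s (ξ - y) (ζ - z) (n + r) * LGH m s x y z (k + l - n - r) := by
  set F : ℕ → ℂ := fun j => gouldHopper s (ξ - y) (ζ - z) j * LGH m s x y z (k + l - j)
  calc LGH m s x ξ ζ (k + l)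
      = ∑ j ∈ range (k + l + 1), ((k + l).choose j : ℂ) * F j := by
        simp only [F, ← mul_assoc]
        exact LGH_eq_sum_choose_mul_gouldHopper hm.ne' hs.ne' x ξ ζ y z (k + l)
    _ = ∑ n ∈ range (k + 1), ∑ r ∈ range (l + 1), (k.choose n : ℂ) * l.choose r * F (n + r) :=
        (sum_range_choose_mul_choose_mul k l F).symm
    _ = _ := by simp only [F, Nat.sub_sub, mul_assoc]
end

section
/- For all positive integers m, s, all natural numbers n, r, and all complex numbers x, ξ, ζ, X, Ω, U, y, z, Y, Z: _LH_n^{(m,s)}(x,ξ,ζ) · _LH_r^{(m,s)}(X,Ω,U) = Σ_{k=0}^{n} Σ_{p=0}^{r} C(n,k) C(r,p) · g_k^s(ξ−y, ζ−z) · g_p^s(Ω−Y, U−Z) · _LH_{n-k}^{(m,s)}(x,y,z) · _LH_{r-p}^{(m,s)}(X,Y,Z), where C(a,b) denotes the ordinary binomial coefficient. -/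
/-!
With `E a b := e^{a t + b tˢ}`, the generating functions are
`∑ gₙˢ(a, b) tⁿ/n! = E a b` and `∑ _LH_n^{(m,s)}(x, y, z) tⁿ/n! = E y z · C₀(-x tᵐ)`, where
`C₀(-x t) = ∑ xᵏ tᵏ/(k!)²` is the Tricomi function. Since `E ξ ζ = E (ξ - y) (ζ - z) · E y z`,
the generating function of `_LH_n(x, ξ, ζ)` is the product of those of `gₙˢ(ξ - y, ζ - z)` and
`_LH_n(x, y, z)`, so comparing coefficients gives the binomial expansion
`_LH_n(x, ξ, ζ) = ∑ C(n, k) gₖˢ(ξ - y, ζ - z) _LH_{n-k}(x, y, z)`; the product formula is the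
product of two such expansions. Everything happens in `ℂ⟦X⟧`, with `t ↦ tˢ` being
`PowerSeries.expand s`.
-/

open Finset PowerSeries
open scoped Nat

namespace PowerSeries

theorem coeff_expand_mul_eq_sum_s18 {R : Type*} [CommRing R] (d : ℕ) (hd : d ≠ 0) (f g : R⟦X⟧)
    (n : ℕ) :
    coeff n (expand d hd f * g) = ∑ k ∈ range (n / d + 1), coeff k f * coeff (n - d * k) g := by
  have hd' : 0 < d := Nat.pos_of_ne_zero hd
  rw [coeff_mul, Nat.sum_antidiagonal_eq_sum_range_succ_mk]
  simp only [coeff_expand, ite_mul, zero_mul, ← sum_filter]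
  refine (sum_nbij' (d * ·) (· / d) ?_ ?_ ?_ ?_ ?_).symm
  · intro k hk
    simp only [mem_filter, mem_range] at hk ⊢
    refine ⟨?_, dvd_mul_right d k⟩
    rw [Nat.lt_succ_iff, mul_comm, ← Nat.le_div_iff_mul_le hd']
    omega
  · intro i hi
    simp only [mem_filter, mem_range] at hi ⊢
    have := Nat.div_le_div_right (c := d) (Nat.lt_succ_iff.1 hi.1)
    omega
  · intro k _
    simp [Nat.mul_div_cancel_left _ hd']
  · intro i hi
    exact Nat.mul_div_cancel' (mem_filter.1 hi).2
  · intro k _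
    simp [Nat.mul_div_cancel_left _ hd']

theorem factorial_mul_coeff_mul {R : Type*} [CommSemiring R] (F G : R⟦X⟧) (n : ℕ) :
    (n ! : R) * coeff n (F * G) = ∑ k ∈ range (n + 1),
      (n.choose k : R) * ((k ! : R) * coeff k F) * (((n - k)! : R) * coeff (n - k) G) := by
  rw [coeff_mul, Nat.sum_antidiagonal_eq_sum_range_succ_mk, mul_sum]
  refine sum_congr rfl fun k hk => ?_
  rw [← Nat.choose_mul_factorial_mul_factorial (Nat.lt_succ_iff.1 (mem_range.1 hk))]
  push_cast
  ring

theorem coeff_rescale_exp {K : Type*} [Field K] [CharZero K] (a : K) (n : ℕ) :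
    coeff n (rescale a (exp K)) = a ^ n / n ! := by
  simp [coeff_rescale, div_eq_mul_inv]

end PowerSeries

noncomputable def tricomiSeries (x : ℂ) : ℂ⟦X⟧ :=
  mk fun k => x ^ k / (k ! : ℂ) ^ 2

theorem gouldHopper_eq_factorial_mul_coeff {s : ℕ} (hs : s ≠ 0) (a b : ℂ) (n : ℕ) :
    gouldHopper s a b n = n ! * coeff n (expand s hs (rescale b (exp ℂ)) * rescale a (exp ℂ)) := by
  rw [gouldHopper, coeff_expand_mul_eq_sum_s18]
  refine congrArg _ (sum_congr rfl fun k _ => ?_)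
  rw [coeff_rescale_exp, coeff_rescale_exp]
  ring

theorem lag2D_eq_factorial_mul_coeff {m : ℕ} (hm : m ≠ 0) (x y : ℂ) (n : ℕ) :
    lag2D m x y n = n ! * coeff n (expand m hm (tricomiSeries x) * rescale y (exp ℂ)) := by
  rw [lag2D, coeff_expand_mul_eq_sum_s18]
  refine congrArg _ (sum_congr rfl fun k _ => ?_)
  rw [tricomiSeries, coeff_mk, coeff_rescale_exp]
  ring

theorem LGH_eq_factorial_mul_coeff {m s : ℕ} (hm : m ≠ 0) (hs : s ≠ 0) (x y z : ℂ) (n : ℕ) :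
    LGH m s x y z n = n ! * coeff n
      (expand s hs (rescale z (exp ℂ)) * (expand m hm (tricomiSeries x) * rescale y (exp ℂ))) := by
  rw [LGH, coeff_expand_mul_eq_sum_s18]
  refine congrArg _ (sum_congr rfl fun k _ => ?_)
  have : ((n - s * k)! : ℂ) ≠ 0 := mod_cast (n - s * k).factorial_ne_zero
  rw [coeff_rescale_exp, lag2D_eq_factorial_mul_coeff hm]
  field_simp

theorem LGH_series_eq_gouldHopper_series_mul {m s : ℕ} (hm : m ≠ 0) (hs : s ≠ 0)
    (x ξ ζ y z : ℂ) :
    expand s hs (rescale ζ (exp ℂ)) * (expand m hm (tricomiSeries x) * rescale ξ (exp ℂ)) =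
      (expand s hs (rescale (ζ - z) (exp ℂ)) * rescale (ξ - y) (exp ℂ)) *
        (expand s hs (rescale z (exp ℂ)) * (expand m hm (tricomiSeries x) * rescale y (exp ℂ))) := by
  have split (a b : ℂ) : rescale a (exp ℂ) = rescale (a - b) (exp ℂ) * rescale b (exp ℂ) := by
    rw [exp_mul_exp_eq_exp_add, sub_add_cancel]
  rw [split ζ z, split ξ y, map_mul]
  ring

theorem LGH_eq_sum_choose_mul_gouldHopper_mul_LGH {m s : ℕ} (hm : m ≠ 0) (hs : s ≠ 0) (n : ℕ)
    (x ξ ζ y z : ℂ) :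
    LGH m s x ξ ζ n = ∑ k ∈ range (n + 1),
      (n.choose k : ℂ) * gouldHopper s (ξ - y) (ζ - z) k * LGH m s x y z (n - k) := by
  rw [LGH_eq_factorial_mul_coeff hm hs, LGH_series_eq_gouldHopper_series_mul hm hs x ξ ζ y z,
    factorial_mul_coeff_mul]
  simp only [← gouldHopper_eq_factorial_mul_coeff, ← LGH_eq_factorial_mul_coeff]

theorem LGH_product_formula (m s : ℕ) (hm : 0 < m) (hs : 0 < s)
    (n r : ℕ) (x ξ ζ X Ω U y z Y Z : ℂ) :
    LGH m s x ξ ζ n * LGH m s X Ω U r =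
      ∑ k ∈ Finset.range (n + 1), ∑ p ∈ Finset.range (r + 1),
        (Nat.choose n k : ℂ) * (Nat.choose r p : ℂ) *
          gouldHopper s (ξ - y) (ζ - z) k * gouldHopper s (Ω - Y) (U - Z) p *
          LGH m s x y z (n - k) * LGH m s X Y Z (r - p) := by
  rw [LGH_eq_sum_choose_mul_gouldHopper_mul_LGH hm.ne' hs.ne' n x ξ ζ y z,
    LGH_eq_sum_choose_mul_gouldHopper_mul_LGH hm.ne' hs.ne' r X Ω U Y Z, sum_mul_sum]
  refine sum_congr rfl fun k _ => sum_congr rfl fun p _ => ?_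
  ring
end

section
/- For every positive integer m, all natural numbers k, l, and all complex numbers ξ, x, y: g_{k+l}^m(ξ,y) = Σ_{n=0}^{k} Σ_{r=0}^{l} C(k,n) C(l,r) (ξ−x)^{n+r} · g_{k+l-n-r}^m(x,y), where C(a,b) denotes the ordinary binomial coefficient. -/
private lemma GH_translate (m : ℕ) (hm : 0 < m) (N : ℕ) (ξ x y : ℂ) :
    gouldHopper m ξ y N = ∑ j ∈ Finset.range (N + 1),
      (N.choose j : ℂ) * ((ξ - x) ^ j * gouldHopper m x y (N - j)) := by
  have mem : ∀ a j : ℕ, (a ≤ N ∧ j ≤ N - a) ↔ (a ≤ N - j ∧ j ≤ N) := fun a j => by omega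
  unfold gouldHopper
  rw [Finset.mul_sum]
  have expand : ∀ c ∈ Finset.range (N / m + 1),
      (N.factorial : ℂ) * (ξ ^ (N - m * c) * y ^ c /
        ((c.factorial : ℂ) * ((N - m * c).factorial : ℂ)))
      = ∑ j ∈ Finset.range (N - m * c + 1),
          (N.factorial : ℂ) * ((ξ - x) ^ j * x ^ (N - m * c - j) * ((N - m * c).choose j : ℂ)
            * y ^ c / ((c.factorial : ℂ) * ((N - m * c).factorial : ℂ))) := by
    intro c _
    conv_lhs => rw [← sub_add_cancel ξ x, add_pow, Finset.sum_mul, Finset.sum_div,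
      Finset.mul_sum]
  rw [Finset.sum_congr rfl expand]
  rw [Finset.sum_comm' (t' := Finset.range (N + 1))
    (s' := fun j => Finset.range ((N - j) / m + 1)) ?_]
  · refine Finset.sum_congr rfl fun j hj => ?_
    simp only [Finset.mul_sum]
    refine Finset.sum_congr rfl fun c hc => ?_
    rw [Finset.mem_range, Nat.lt_succ_iff] at hj hc
    rw [Nat.le_div_iff_mul_le hm, mul_comm c m] at hc
    have hmcN : m * c ≤ N := le_trans hc (Nat.sub_le N j)
    have hj' : j ≤ N - m * c := ((mem (m * c) j).mpr ⟨hc, hj⟩).2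
    have h1 : (((N - m * c).choose j : ℕ) : ℂ) * (j.factorial : ℂ) * ((N - m * c - j).factorial : ℂ)
        = (((N - m * c).factorial : ℕ) : ℂ) := by
      exact_mod_cast congrArg (Nat.cast (R := ℂ)) (Nat.choose_mul_factorial_mul_factorial hj')
    have h2 : ((N.choose j : ℕ) : ℂ) * (j.factorial : ℂ) * ((N - j).factorial : ℂ)
        = ((N.factorial : ℕ) : ℂ) := by
      exact_mod_cast congrArg (Nat.cast (R := ℂ)) (Nat.choose_mul_factorial_mul_factorial hj)
    have hsub : N - m * c - j = N - j - m * c := Nat.sub_right_comm N (m * c) j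
    rw [hsub]
    have n1 : (c.factorial : ℂ) ≠ 0 := Nat.cast_ne_zero.mpr (Nat.factorial_ne_zero c)
    have n2 : ((N - j - m * c).factorial : ℂ) ≠ 0 := Nat.cast_ne_zero.mpr (Nat.factorial_ne_zero _)
    have n3 : (j.factorial : ℂ) ≠ 0 := Nat.cast_ne_zero.mpr (Nat.factorial_ne_zero j)
    have n4 : ((N - j).factorial : ℂ) ≠ 0 := Nat.cast_ne_zero.mpr (Nat.factorial_ne_zero _)
    rw [hsub] at h1
    have n5 : (((N - m * c).factorial : ℕ) : ℂ) ≠ 0 := Nat.cast_ne_zero.mpr (Nat.factorial_ne_zero _)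
    have e1 : (((N - m * c).choose j : ℕ) : ℂ)
        = (((N - m * c).factorial : ℕ) : ℂ) / ((j.factorial : ℂ) * ((N - j - m * c).factorial : ℂ)) := by
      rw [eq_div_iff (mul_ne_zero n3 n2)]
      linear_combination h1
    have e2 : ((N.choose j : ℕ) : ℂ)
        = ((N.factorial : ℕ) : ℂ) / ((j.factorial : ℂ) * ((N - j).factorial : ℂ)) := by
      rw [eq_div_iff (mul_ne_zero n3 n4)]
      linear_combination h2
    rw [e1, e2]
    field_simp
  · intro c j
    simp only [Finset.mem_range, Nat.lt_succ_iff, Nat.le_div_iff_mul_le hm, mul_comm c m]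
    exact mem (m * c) j

private lemma GH_vandermonde_sum (k l : ℕ) (F : ℕ → ℂ) :
    ∑ j ∈ Finset.range (k + l + 1), ((k + l).choose j : ℂ) * F j
      = ∑ n ∈ Finset.range (k + 1), ∑ r ∈ Finset.range (l + 1),
          (k.choose n : ℂ) * (l.choose r : ℂ) * F (n + r) := by
  have h1 : ∀ j ∈ Finset.range (k + l + 1),
      ((k + l).choose j : ℂ) * F j
        = ∑ a ∈ Finset.range (j + 1),
            (fun a b => (k.choose a : ℂ) * (l.choose b : ℂ) * F (a + b)) a (j - a) := by
    intro j hj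
    rw [Nat.add_choose_eq, Finset.Nat.sum_antidiagonal_eq_sum_range_succ_mk]
    push_cast
    rw [Finset.sum_mul]
    refine Finset.sum_congr rfl fun a ha => ?_
    rw [Finset.mem_range, Nat.lt_succ_iff] at ha
    rw [Nat.add_sub_cancel' ha]
  rw [Finset.sum_congr rfl h1, Finset.sum_range_diag_flip (k + l + 1)
    (fun a b => (k.choose a : ℂ) * (l.choose b : ℂ) * F (a + b))]
  rw [← Finset.sum_subset (Finset.range_subset_range.mpr (by omega : k + 1 ≤ k + l + 1))
    (fun n hn hn' => ?_)]
  · refine Finset.sum_congr rfl fun n hn => ?_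
    rw [Finset.mem_range, Nat.lt_succ_iff] at hn
    rw [← Finset.sum_subset (Finset.range_subset_range.mpr (by omega : l + 1 ≤ k + l + 1 - n))
      (fun r hr hr' => ?_)]
    rw [Finset.mem_range, not_lt] at hr'
    rw [Nat.choose_eq_zero_of_lt (by omega : l < r)]
    push_cast
    ring
  · rw [Finset.mem_range, not_lt] at hn'
    rw [Finset.sum_eq_zero]
    intro r _
    rw [Nat.choose_eq_zero_of_lt (by omega : k < n)]
    push_cast
    ring

theorem gouldHopper_connection (m : ℕ) (hm : 0 < m)
    (k l : ℕ) (ξ x y : ℂ) :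
    gouldHopper m ξ y (k + l) =
      ∑ n ∈ Finset.range (k + 1), ∑ r ∈ Finset.range (l + 1),
        (Nat.choose k n : ℂ) * (Nat.choose l r : ℂ) *
          (ξ - x) ^ (n + r) * gouldHopper m x y (k + l - n - r) := by
  rw [GH_translate m hm (k + l) ξ x y,
    GH_vandermonde_sum k l (fun j => (ξ - x) ^ j * gouldHopper m x y (k + l - j))]
  refine Finset.sum_congr rfl fun n _ => Finset.sum_congr rfl fun r _ => ?_
  rw [Nat.sub_sub]
  ring
end
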